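/- arXiv:2003.06657 — 4 statements merged into one kernel-verified Lean document; each statement's English description precedes it below -/
import Mathlib

section
/- Let V be a normed complex vector space, let T : V → V be a linear map with ‖T(p)‖ ≤ ‖p‖ for all p, let r ∈ (0,1), f ∈ V, and suppose p∞ ∈ V satisfies p∞ = (1−r)p∞ − r·T(p∞) + r·f. If the sequence (pₙ) is defined by pₙ = (1−r)pₙ₋₁ − r·T(pₙ₋₁) + r·f, and V is an inner product space with γ := inf_{w≠0} ‖(Id+T)w‖/‖w‖, then ‖pₙ − p∞‖ ≤ (1 − r(1−r)γ²)^{n/2} · ‖p₀ − p∞‖ for all n ≥ 0. -/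
/-!
The error `eₙ = pₙ - p∞` obeys `eₙ₊₁ = (1 - r) eₙ + r (-T eₙ)`. In an inner product space
`‖(1 - r) a + r b‖² = (1 - r) ‖a‖² + r ‖b‖² - r (1 - r) ‖a - b‖²`; with `a = eₙ`, `b = -T eₙ`,
the contraction bound `‖T eₙ‖ ≤ ‖eₙ‖` and `‖eₙ + T eₙ‖ ≥ γ ‖eₙ‖` this gives
`‖eₙ₊₁‖² ≤ (1 - r (1 - r) γ²) ‖eₙ‖²`.
-/

open scoped InnerProductSpace

theorem norm_one_sub_smul_add_smul_sq {𝕜 E : Type*} [RCLike 𝕜] [SeminormedAddCommGroup E]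
    [InnerProductSpace 𝕜 E] [NormedSpace ℝ E] [IsScalarTower ℝ 𝕜 E] (t : ℝ) (a b : E) :
    ‖(1 - t) • a + t • b‖ ^ 2 = (1 - t) * ‖a‖ ^ 2 + t * ‖b‖ ^ 2 - t * (1 - t) * ‖a - b‖ ^ 2 := by
  obtain ⟨d, rfl⟩ : ∃ d, b = a - d := ⟨a - b, by abel⟩
  rw [show (1 - t) • a + t • (a - d) = a - t • d by module, sub_sub_cancel,
    norm_sub_sq (𝕜 := 𝕜), norm_sub_sq (𝕜 := 𝕜), RCLike.real_smul_eq_coe_smul (K := 𝕜),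
    inner_smul_right, norm_smul, RCLike.re_ofReal_mul, RCLike.norm_ofReal, mul_pow, sq_abs]
  ring

/-- The minimum modulus of `F`; by the `sInf ∅ = 0` convention it is `0` on the trivial space. -/
noncomputable def minimumModulus {V E : Type*} [NormedAddCommGroup V] [SeminormedAddCommGroup E]
    (F : V → E) : ℝ :=
  sInf {x : ℝ | ∃ w : V, w ≠ 0 ∧ x = ‖F w‖ / ‖w‖}

section MinimumModulus

variable {V E : Type*} [NormedAddCommGroup V] [SeminormedAddCommGroup E]

theorem minimumModulus_nonneg (F : V → E) : 0 ≤ minimumModulus F :=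
  Real.sInf_nonneg <| by
    rintro x ⟨w, -, rfl⟩
    positivity

theorem minimumModulus_mul_norm_le (F : V → E) (w : V) : minimumModulus F * ‖w‖ ≤ ‖F w‖ := by
  rcases eq_or_ne w 0 with rfl | hw
  · simp
  have hbdd : BddBelow {x : ℝ | ∃ w : V, w ≠ 0 ∧ x = ‖F w‖ / ‖w‖} := ⟨0, by
    rintro x ⟨w, -, rfl⟩
    positivity⟩
  rw [← le_div_iff₀ (norm_pos_iff.mpr hw)]
  exact csInf_le hbdd ⟨w, hw, rfl⟩

theorem minimumModulus_le {F : V → E} {K : ℝ} (hK : 0 ≤ K) (hF : ∀ w, ‖F w‖ ≤ K * ‖w‖) :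
    minimumModulus F ≤ K := by
  rcases Set.eq_empty_or_nonempty {x : ℝ | ∃ w : V, w ≠ 0 ∧ x = ‖F w‖ / ‖w‖} with h | ⟨x, hx⟩
  · rwa [minimumModulus, h, Real.sInf_empty]
  · obtain ⟨w, hw, rfl⟩ := hx
    refine csInf_le_of_le ⟨0, ?_⟩ ⟨w, hw, rfl⟩ ?_
    · rintro x ⟨w, -, rfl⟩
      positivity
    · exact div_le_of_le_mul₀ (norm_nonneg _) hK (hF w)

end MinimumModulus

theorem norm_relaxedStep_sq_le {𝕜 E : Type*} [RCLike 𝕜] [SeminormedAddCommGroup E]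
    [InnerProductSpace 𝕜 E] [NormedSpace ℝ E] [IsScalarTower ℝ 𝕜 E] {r γ : ℝ} {w v : E}
    (hr0 : 0 ≤ r) (hr1 : r ≤ 1) (hγ : 0 ≤ γ) (hv : ‖v‖ ≤ ‖w‖) (hwv : γ * ‖w‖ ≤ ‖w + v‖) :
    ‖(1 - r) • w - r • v‖ ^ 2 ≤ (1 - r * (1 - r) * γ ^ 2) * ‖w‖ ^ 2 := by
  have hsq := norm_one_sub_smul_add_smul_sq (𝕜 := 𝕜) r w (-v)
  rw [smul_neg, ← sub_eq_add_neg, norm_neg, sub_neg_eq_add] at hsq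
  have hv2 : ‖v‖ ^ 2 ≤ ‖w‖ ^ 2 := pow_le_pow_left₀ (norm_nonneg _) hv 2
  have hwv2 : γ ^ 2 * ‖w‖ ^ 2 ≤ ‖w + v‖ ^ 2 := by
    rw [← mul_pow]; exact pow_le_pow_left₀ (by positivity) hwv 2
  rw [hsq]
  nlinarith [mul_le_mul_of_nonneg_left hv2 hr0,
    mul_le_mul_of_nonneg_left hwv2 (mul_nonneg hr0 (sub_nonneg.mpr hr1))]

theorem norm_le_rpow_half_mul_of_sq_le {E : Type*} [SeminormedAddCommGroup E] {e : ℕ → E} {c : ℝ}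
    (hc : 0 ≤ c) (he : ∀ n, ‖e (n + 1)‖ ^ 2 ≤ c * ‖e n‖ ^ 2) (n : ℕ) :
    ‖e n‖ ≤ c ^ ((n : ℝ) / 2) * ‖e 0‖ := by
  have hsq : ‖e n‖ ^ 2 ≤ c ^ n * ‖e 0‖ ^ 2 := by
    induction n with
    | zero => simp
    | succ n ih =>
      calc ‖e (n + 1)‖ ^ 2 ≤ c * ‖e n‖ ^ 2 := he n
        _ ≤ c * (c ^ n * ‖e 0‖ ^ 2) := mul_le_mul_of_nonneg_left ih hc
        _ = c ^ (n + 1) * ‖e 0‖ ^ 2 := by ring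
  rw [div_eq_mul_one_div, Real.rpow_mul hc, Real.rpow_natCast, ← Real.sqrt_eq_rpow,
    ← Real.sqrt_sq (norm_nonneg (e n)), ← Real.sqrt_sq (norm_nonneg (e 0)), ← Real.sqrt_mul
    (pow_nonneg hc n)]
  exact Real.sqrt_le_sqrt hsq

theorem stmt_3_general {V : Type*} [NormedAddCommGroup V] [InnerProductSpace ℂ V]
    (T : V →ₗ[ℂ] V) (hT : ∀ w, ‖T w‖ ≤ ‖w‖)
    (r : ℝ) (hr0 : 0 < r) (hr1 : r < 1) (f pinf : V)
    (hfix : pinf = (1 - r) • pinf - r • T pinf + r • f)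
    (p : ℕ → V) (hp : ∀ n : ℕ, p (n + 1) = (1 - r) • p n - r • T (p n) + r • f)
    (γ : ℝ) (hγ : γ = sInf {x : ℝ | ∃ w : V, w ≠ 0 ∧ x = ‖w + T w‖ / ‖w‖}) :
    ∀ n : ℕ, ‖p n - pinf‖ ≤ (1 - r * (1 - r) * γ ^ 2) ^ ((n : ℝ) / 2) * ‖p 0 - pinf‖ := by
  replace hγ : γ = minimumModulus (fun w => w + T w) := hγ
  have hγ0 : 0 ≤ γ := hγ ▸ minimumModulus_nonneg _
  have hγ2 : γ ≤ 2 := hγ ▸ minimumModulus_le zero_le_two fun w =>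
    (norm_add_le _ _).trans (by linarith [hT w])
  have herr : ∀ n, p (n + 1) - pinf = (1 - r) • (p n - pinf) - r • T (p n - pinf) := by
    intro n
    rw [hp, map_sub]
    nth_rewrite 1 [hfix]
    module
  have hc : 0 ≤ 1 - r * (1 - r) * γ ^ 2 := by
    nlinarith [sq_nonneg (2 * r - 1), mul_le_mul hγ2 hγ2 hγ0 zero_le_two,
      mul_nonneg hr0.le (sub_nonneg.mpr hr1.le)]
  refine norm_le_rpow_half_mul_of_sq_le hc fun n => ?_
  rw [herr]
  exact norm_relaxedStep_sq_le (𝕜 := ℂ) hr0.le hr1.le hγ0 (hT _)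
    (hγ ▸ minimumModulus_mul_norm_le _ _)

theorem stmt_3 {V : Type*} [NormedAddCommGroup V] [InnerProductSpace ℂ V]
    [FiniteDimensional ℂ V] (T : V →ₗ[ℂ] V) (hT : ∀ w, ‖T w‖ ≤ ‖w‖)
    (r : ℝ) (hr0 : 0 < r) (hr1 : r < 1) (f pinf : V)
    (hfix : pinf = (1 - r) • pinf - r • T pinf + r • f)
    (p : ℕ → V) (hp : ∀ n : ℕ, p (n + 1) = (1 - r) • p n - r • T (p n) + r • f)
    (γ : ℝ) (hγ : γ = sInf {x : ℝ | ∃ w : V, w ≠ 0 ∧ x = ‖w + T w‖ / ‖w‖}) :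
    ∀ n : ℕ, ‖p n - pinf‖ ≤ (1 - r * (1 - r) * γ ^ 2) ^ ((n : ℝ) / 2) * ‖p 0 - pinf‖ :=
  stmt_3_general T hT r hr0 hr1 f pinf hfix p hp γ hγ
end

section
/- Let V be a finite-dimensional complex vector space with Hermitian inner product t, and let a : V × V → ℂ be a sesquilinear form such that Im(a(u,u)) ≤ 0 for all u ∈ V. Assume that for every q ∈ V there is a unique w ∈ V with a(w,v) − i·t(w,v) = t(q,v) for all v ∈ V. Define S(q) := q + 2i·w. Then ‖S(q)‖_t ≤ ‖q‖_t for all q ∈ V, where ‖·‖_t is the norm induced by t. -/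
/-!
Testing the defining equation of `w = Sol q` against `v = w` gives `⟪w, q⟫ = a(w, w) - i‖w‖²`.
Expanding the square then yields the energy identity `‖q + 2i w‖² = ‖q‖² + 4 Im a(w, w)`,
and the dissipativity `Im a(w, w) ≤ 0` makes the right-hand side at most `‖q‖²`.
-/

open Complex ComplexConjugate InnerProductSpace

theorem norm_add_two_I_smul_sq {E : Type*} [NormedAddCommGroup E] [InnerProductSpace ℂ E]
    {q w : E} {z : ℂ} (h : ⟪w, q⟫_ℂ = z - I * ⟪w, w⟫_ℂ) :
    ‖q + (2 * I) • w‖ ^ 2 = ‖q‖ ^ 2 + 4 * z.im := by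
  have hqw : ⟪q, w⟫_ℂ = conj z + I * (‖w‖ ^ 2 : ℝ) := by
    rw [← inner_conj_symm, h, inner_self_eq_norm_sq_to_K]
    simp
  have hre : (⟪q, (2 * I) • w⟫_ℂ).re = 2 * z.im - 2 * ‖w‖ ^ 2 := by
    rw [inner_smul_right, hqw]
    simp only [mul_re, mul_im, add_re, add_im, conj_re, conj_im, ofReal_re, ofReal_im, re_ofNat,
      im_ofNat, I_re, I_im]
    ring
  rw [norm_add_sq (𝕜 := ℂ), norm_smul, RCLike.re_to_complex, hre]
  simp only [Complex.norm_mul, norm_ofNat, norm_I]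
  ring

theorem stmt_6_general {V : Type*} [NormedAddCommGroup V] [InnerProductSpace ℂ V]
    (a : V →ₗ[ℂ] V →ₛₗ[starRingEnd ℂ] ℂ)
    (ha : ∀ u : V, (a u u).im ≤ 0) (Sol : V → V)
    (hSol : ∀ q v : V, a (Sol q) v - Complex.I * (inner ℂ v (Sol q) : ℂ) = (inner ℂ v q : ℂ)) :
    ∀ q : V, ‖q + (2 * Complex.I) • Sol q‖ ≤ ‖q‖ := by
  intro q
  have hsq : ‖q + (2 * I) • Sol q‖ ^ 2 ≤ ‖q‖ ^ 2 := by
    rw [norm_add_two_I_smul_sq (hSol q (Sol q)).symm]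
    linarith [ha (Sol q)]
  exact (sq_le_sq₀ (norm_nonneg _) (norm_nonneg _)).1 hsq

theorem stmt_6 {V : Type*} [NormedAddCommGroup V] [InnerProductSpace ℂ V]
    [FiniteDimensional ℂ V] (a : V →ₗ[ℂ] V →ₛₗ[starRingEnd ℂ] ℂ)
    (ha : ∀ u : V, (a u u).im ≤ 0) (Sol : V → V)
    (hSol : ∀ q v : V, a (Sol q) v - Complex.I * (inner ℂ v (Sol q) : ℂ) = (inner ℂ v q : ℂ))
    (hUniq : ∀ q w : V,
      (∀ v : V, a w v - Complex.I * (inner ℂ v w : ℂ) = (inner ℂ v q : ℂ)) → w = Sol q) :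
    ∀ q : V, ‖q + (2 * Complex.I) • Sol q‖ ≤ ‖q‖ :=
  stmt_6_general a ha Sol hSol
end

section
/- Let V be a finite-dimensional complex inner product space with inner product t, W a subspace, and Π = 2P − Id where P is the orthogonal projection onto W. Suppose S : V → V is linear and C ⊆ V × V is the set of pairs (u_D, u_N) with u_N + i·u_D = S(u_N − i·u_D). Assume V × V = (W × W⊥) ⊕ C as a direct sum, with projection P_h onto C along W × W⊥. Then for any f ∈ V, setting p_D = i(Id−Π)f/4, p_N = (Id+Π)f/4 and (u_D, u_N) = P_h(p_D, p_N), the element u_N − i·u_D satisfies (Id + Π∘S)(u_N − i·u_D) = f. -/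
/-!
Write `R = 2P - Id` for the reflection in `W`. The boundary data split as
`p_N = (f + R f)/4 ∈ W` and `p_D = i (f - R f)/4 ∈ Wᗮ`, and `P_h` only changes them by elements of
`W × Wᗮ`; hence `R u_N = 2 p_N - u_N` and `R u_D = u_D - 2 p_D`. Since `(u_D, u_N) ∈ C`, the
left-hand side is `(u_N - i u_D) + R (u_N + i u_D) = 2 p_N - 2 i p_D = f`.
-/

namespace Submodule

variable {𝕜 E : Type*} [RCLike 𝕜] [NormedAddCommGroup E] [InnerProductSpace 𝕜 E]
  (K : Submodule 𝕜 E) [K.HasOrthogonalProjection]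

theorem add_reflection_mem (v : E) : v + K.reflection v ∈ K := by
  rw [reflection_apply, add_sub_cancel]
  exact nsmul_mem (K.starProjection_apply_mem v) 2

theorem sub_reflection_mem_orthogonal (v : E) : v - K.reflection v ∈ Kᗮ := by
  rw [reflection_apply, sub_sub_eq_add_sub, ← two_smul ℕ v, ← smul_sub]
  exact nsmul_mem (K.sub_starProjection_mem_orthogonal v) 2

theorem reflection_eq_two_smul_sub_of_sub_mem_orthogonal {p u : E} (hp : p ∈ K)
    (hpu : p - u ∈ Kᗮ) : K.reflection u = (2 : ℕ) • p - u := by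
  have hR := map_sub K.reflection p (p - u)
  rw [sub_sub_cancel, K.reflection_mem_subspace_eq_self hp,
    K.reflection_mem_subspace_orthogonalComplement_eq_neg hpu] at hR
  rw [hR, two_smul]
  abel

theorem reflection_eq_sub_two_smul_of_sub_mem {p u : E} (hp : p ∈ Kᗮ) (hpu : p - u ∈ K) :
    K.reflection u = u - (2 : ℕ) • p := by
  have hR := map_sub K.reflection p (p - u)
  rw [sub_sub_cancel, K.reflection_mem_subspace_orthogonalComplement_eq_neg hp,
    K.reflection_mem_subspace_eq_self hpu] at hR
  rw [hR, two_smul]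
  abel

end Submodule

open Complex in
theorem sub_I_smul_add_reflection_add_I_smul_eq {V : Type*} [NormedAddCommGroup V]
    [InnerProductSpace ℂ V] (K : Submodule ℂ V) [K.HasOrthogonalProjection] {f uD uN : V}
    (hD : (I / 4) • (f - K.reflection f) - uD ∈ K)
    (hN : (4 : ℂ)⁻¹ • (f + K.reflection f) - uN ∈ Kᗮ) :
    (uN - I • uD) + K.reflection (uN + I • uD) = f := by
  have hRD := K.reflection_eq_sub_two_smul_of_sub_mem
    (Kᗮ.smul_mem _ (K.sub_reflection_mem_orthogonal f)) hD
  have hRN := K.reflection_eq_two_smul_sub_of_sub_mem_orthogonal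
    (K.smul_mem _ (K.add_reflection_mem f)) hN
  rw [map_add, map_smul, hRD, hRN]
  match_scalars
  · ring
  · ring
  · linear_combination (-1 / 2 : ℂ) * I_sq
  · linear_combination (1 / 2 : ℂ) * I_sq

theorem stmt_8 {V : Type*} [NormedAddCommGroup V] [InnerProductSpace ℂ V]
    [FiniteDimensional ℂ V] (W : Submodule ℂ V) (Xp : V → V)
    (hXp : ∀ v, Xp v = (2 : ℂ) • ((W.orthogonalProjection v : V)) - v)
    (S : V →ₗ[ℂ] V) (C : Set (V × V))
    (hC : C = {x : V × V | x.2 + Complex.I • x.1 = S (x.2 - Complex.I • x.1)})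
    (Ph : V × V → V × V)
    (hPh1 : ∀ x, Ph x ∈ C)
    (hPh2 : ∀ x, (x - Ph x).1 ∈ W ∧ (x - Ph x).2 ∈ Wᗮ)
    (f : V) :
    ∀ pD pN uD uN : V,
      pD = (Complex.I / 4) • (f - Xp f) →
      pN = (4 : ℂ)⁻¹ • (f + Xp f) →
      (uD, uN) = Ph (pD, pN) →
      (uN - Complex.I • uD) + Xp (S (uN - Complex.I • uD)) = f := by
  intro pD pN uD uN hpD hpN huv
  have hXp_eq : Xp = W.reflection := funext fun v => by
    rw [hXp, W.reflection_apply, two_smul, two_smul]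
    rfl
  have hS : uN + Complex.I • uD = S (uN - Complex.I • uD) := by
    simpa [hC, ← huv] using hPh1 (pD, pN)
  obtain ⟨hD, hN⟩ := hPh2 (pD, pN)
  rw [← huv, hpD, hpN, hXp_eq] at hD hN
  rw [← hS, hXp_eq]
  exact sub_I_smul_add_reflection_add_I_smul_eq W hD hN
end

section
/- Let V be a finite-dimensional complex inner product space, S : V → V a linear contraction, Π : V → V a linear isometry with Π² = Id, W the fixed subspace of Π (i.e. Π = 2P − Id with P the orthogonal projection onto W), and suppose that the only p ∈ V with (Id + Π∘S)p = 0 is p = 0. Then for all p ∈ V, Re⟨p, (Id + ΠS)p⟩ ≥ (γ²/2)‖p‖² with γ > 0, so the sesquilinear form (p,q) ↦ ⟨q, (Id+ΠS)p⟩ is coercive on V. -/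
/-! Since `‖Π S p‖ ≤ ‖p‖`, expanding `‖p + Π S p‖²` gives
`‖(Id + Π S) p‖² ≤ 2 Re ⟪p, (Id + Π S) p⟫`. In finite dimension the injective operator
`Id + Π S` is bounded below, so `γ > 0` and `γ ‖p‖ ≤ ‖(Id + Π S) p‖`; squaring gives the claim. -/

theorem LinearMap.exists_pos_mul_norm_le_of_injective {𝕜 E F : Type*} [NontriviallyNormedField 𝕜]
    [CompleteSpace 𝕜] [NormedAddCommGroup E] [NormedSpace 𝕜 E] [FiniteDimensional 𝕜 E]
    [NormedAddCommGroup F] [NormedSpace 𝕜 F] (f : E →ₗ[𝕜] F) (hf : Function.Injective f) :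
    ∃ c > 0, ∀ x, c * ‖x‖ ≤ ‖f x‖ := by
  obtain ⟨K, hK0, hK⟩ := f.injective_iff_antilipschitz.mp hf
  refine ⟨(K : ℝ)⁻¹, by positivity, fun x => ?_⟩
  rw [inv_mul_le_iff₀ (by positivity)]
  exact ZeroHomClass.bound_of_antilipschitz f hK x

section NormRatio

variable {E F : Type*} [NormedAddCommGroup E] [NormedAddCommGroup F] {f : E → F} {c : ℝ}

theorem mem_lowerBounds_norm_div_norm (hc : ∀ x, c * ‖x‖ ≤ ‖f x‖) :
    c ∈ lowerBounds {r : ℝ | ∃ x : E, x ≠ 0 ∧ r = ‖f x‖ / ‖x‖} := by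
  rintro r ⟨x, hx, rfl⟩
  exact (le_div_iff₀ (norm_pos_iff.mpr hx)).mpr (hc x)

theorem le_sInf_norm_div_norm [Nontrivial E] (hc : ∀ x, c * ‖x‖ ≤ ‖f x‖) :
    c ≤ sInf {r : ℝ | ∃ x : E, x ≠ 0 ∧ r = ‖f x‖ / ‖x‖} := by
  obtain ⟨x, hx⟩ := exists_ne (0 : E)
  exact le_csInf ⟨_, x, hx, rfl⟩ (mem_lowerBounds_norm_div_norm hc)

theorem sInf_norm_div_norm_mul_norm_le (hc : ∀ x, c * ‖x‖ ≤ ‖f x‖) (x : E) :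
    sInf {r : ℝ | ∃ x : E, x ≠ 0 ∧ r = ‖f x‖ / ‖x‖} * ‖x‖ ≤ ‖f x‖ := by
  rcases eq_or_ne x 0 with rfl | hx
  · simp
  have hbdd := (⟨c, mem_lowerBounds_norm_div_norm hc⟩ :
    BddBelow {r : ℝ | ∃ x : E, x ≠ 0 ∧ r = ‖f x‖ / ‖x‖})
  exact (le_div_iff₀ (norm_pos_iff.mpr hx)).mp (csInf_le hbdd ⟨x, hx, rfl⟩)

end NormRatio

theorem norm_add_sq_le_two_mul_re_inner {𝕜 E : Type*} [RCLike 𝕜] [NormedAddCommGroup E]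
    [InnerProductSpace 𝕜 E] {x y : E} (h : ‖y‖ ≤ ‖x‖) :
    ‖x + y‖ ^ 2 ≤ 2 * RCLike.re (inner 𝕜 x (x + y)) := by
  have hy : ‖y‖ ^ 2 ≤ ‖x‖ ^ 2 := pow_le_pow_left₀ (norm_nonneg y) h 2
  rw [norm_add_sq (𝕜 := 𝕜), inner_add_right, map_add, inner_self_eq_norm_sq (𝕜 := 𝕜)]
  linarith

theorem stmt_15_general {V : Type*} [NormedAddCommGroup V] [InnerProductSpace ℂ V]
    [FiniteDimensional ℂ V] [Nontrivial V] (S Pi : V →ₗ[ℂ] V)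
    (hS : ∀ w, ‖S w‖ ≤ ‖w‖) (hPi : ∀ u, ‖Pi u‖ = ‖u‖)
    (hker : ∀ p : V, p + Pi (S p) = 0 → p = 0)
    (γ : ℝ) (hγ : γ = sInf {x : ℝ | ∃ w : V, w ≠ 0 ∧ x = ‖w + Pi (S w)‖ / ‖w‖}) :
    0 < γ ∧ ∀ p : V, γ ^ 2 / 2 * ‖p‖ ^ 2 ≤ (inner ℂ p (p + Pi (S p)) : ℂ).re := by
  set T : V →ₗ[ℂ] V := LinearMap.id + Pi ∘ₗ S
  have hT : Function.Injective T := by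
    rw [← LinearMap.ker_eq_bot, LinearMap.ker_eq_bot']
    exact hker
  obtain ⟨c, hc0, hc⟩ := T.exists_pos_mul_norm_le_of_injective hT
  have hγ_pos : 0 < γ := hγ ▸ hc0.trans_le (le_sInf_norm_div_norm hc)
  refine ⟨hγ_pos, fun p => ?_⟩
  have hγp : γ * ‖p‖ ≤ ‖p + Pi (S p)‖ := hγ ▸ sInf_norm_div_norm_mul_norm_le hc p
  have hcoer := norm_add_sq_le_two_mul_re_inner (𝕜 := ℂ) ((hPi (S p)).trans_le (hS p))
  calc γ ^ 2 / 2 * ‖p‖ ^ 2 = (γ * ‖p‖) ^ 2 / 2 := by ring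
    _ ≤ ‖p + Pi (S p)‖ ^ 2 / 2 := by gcongr
    _ ≤ (inner ℂ p (p + Pi (S p)) : ℂ).re := by
      rw [RCLike.re_to_complex] at hcoer
      linarith

theorem stmt_15 {V : Type*} [NormedAddCommGroup V] [InnerProductSpace ℂ V]
    [FiniteDimensional ℂ V] [Nontrivial V] (S Pi : V →ₗ[ℂ] V)
    (hS : ∀ w, ‖S w‖ ≤ ‖w‖) (hPi : ∀ u, ‖Pi u‖ = ‖u‖)
    (hPi2 : ∀ u, Pi (Pi u) = u)
    (hker : ∀ p : V, p + Pi (S p) = 0 → p = 0)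
    (γ : ℝ) (hγ : γ = sInf {x : ℝ | ∃ w : V, w ≠ 0 ∧ x = ‖w + Pi (S w)‖ / ‖w‖}) :
    0 < γ ∧ ∀ p : V, γ ^ 2 / 2 * ‖p‖ ^ 2 ≤ (inner ℂ p (p + Pi (S p)) : ℂ).re :=
  stmt_15_general S Pi hS hPi hker γ hγ
end
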